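/- arXiv:2409.12860 — 5 statements merged into one kernel-verified Lean document; each statement's English description precedes it below -/
import Mathlib

section
/- Let N > n > m ≥ 1 be positive integers, and let c_0, c_m, c_{m+1}, ..., c_n, c_N be complex numbers with c_0 ≠ 0 and c_N ≠ 0. Define R_1 := max{1, (|c_0| + ∑_{k=m}^n |c_k|)/|c_N|}. Then every complex root w of the polynomial p(w) = c_N w^N + ∑_{k=m}^n c_k w^k + c_0 satisfies |w| ≤ R_1^{1/(N−n)}. -/
/-!
If `‖w‖ ≥ 1`, every lower-order term satisfies `‖c k w^k‖ ≤ ‖c k‖ ‖w‖^n`, so comparing the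
leading term with the rest of the equation `p(w) = 0` gives
`‖c N‖ ‖w‖^N ≤ (‖c 0‖ + ∑ ‖c k‖) ‖w‖^n`, i.e. `‖w‖^(N-n) ≤ R₁`. If `‖w‖ < 1` the bound is
trivial because `R₁ ≥ 1`.
-/

section

variable {𝕜 : Type*} [NormedDivisionRing 𝕜]

theorem norm_sum_mul_pow_le_mul_pow {s : Finset ℕ} {n : ℕ} (hs : ∀ k ∈ s, k ≤ n) (c : ℕ → 𝕜)
    {w : 𝕜} (hw : 1 ≤ ‖w‖) :
    ‖∑ k ∈ s, c k * w ^ k‖ ≤ (∑ k ∈ s, ‖c k‖) * ‖w‖ ^ n := by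
  rw [Finset.sum_mul]
  refine (norm_sum_le _ _).trans (Finset.sum_le_sum fun k hk => ?_)
  rw [norm_mul, norm_pow]
  exact mul_le_mul_of_nonneg_left (pow_le_pow_right₀ hw (hs k hk)) (norm_nonneg _)

theorem norm_pow_sub_le_of_root {N n : ℕ} (hnN : n ≤ N) {s : Finset ℕ} (hs : ∀ k ∈ s, k ≤ n)
    {c : ℕ → 𝕜} (hcN : c N ≠ 0) {w : 𝕜} (hw1 : 1 ≤ ‖w‖)
    (hw : c N * w ^ N + ∑ k ∈ s, c k * w ^ k + c 0 = 0) :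
    ‖w‖ ^ (N - n) ≤ (‖c 0‖ + ∑ k ∈ s, ‖c k‖) / ‖c N‖ := by
  have hlead : c N * w ^ N = -(∑ k ∈ s, c k * w ^ k + c 0) :=
    eq_neg_of_add_eq_zero_left (by rwa [← add_assoc])
  have hbound : ‖c N‖ * (‖w‖ ^ (N - n) * ‖w‖ ^ n) ≤ (‖c 0‖ + ∑ k ∈ s, ‖c k‖) * ‖w‖ ^ n :=
    calc ‖c N‖ * (‖w‖ ^ (N - n) * ‖w‖ ^ n)
        = ‖∑ k ∈ s, c k * w ^ k + c 0‖ := by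
          rw [pow_sub_mul_pow _ hnN, ← norm_pow, ← norm_mul, hlead, norm_neg]
      _ ≤ ‖∑ k ∈ s, c k * w ^ k‖ + ‖c 0‖ := norm_add_le _ _
      _ ≤ (∑ k ∈ s, ‖c k‖) * ‖w‖ ^ n + ‖c 0‖ * ‖w‖ ^ n :=
          add_le_add (norm_sum_mul_pow_le_mul_pow hs c hw1)
            (le_mul_of_one_le_right (norm_nonneg _) (one_le_pow₀ hw1))
      _ = (‖c 0‖ + ∑ k ∈ s, ‖c k‖) * ‖w‖ ^ n := by ring
  rw [le_div_iff₀' (norm_pos_iff.2 hcN)]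
  rw [← mul_assoc] at hbound
  exact le_of_mul_le_mul_right hbound (pow_pos (zero_lt_one.trans_le hw1) n)

end

theorem root_upper_bound_general (N n m : ℕ) (hnN : n < N)
    (c : ℕ → ℂ) (hcN : c N ≠ 0)
    (R₁ : ℝ)
    (hR₁ : R₁ = max 1 ((‖c 0‖ + ∑ k ∈ Finset.Icc m n, ‖c k‖) /
      ‖c N‖))
    (w : ℂ)
    (hw : c N * w ^ N + (∑ k ∈ Finset.Icc m n, c k * w ^ k) + c 0 = 0) :
    ‖w‖ ≤ R₁ ^ ((1 : ℝ) / (N - n : ℕ)) := by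
  have hR₁_ge_one : 1 ≤ R₁ := hR₁ ▸ le_max_left _ _
  rcases le_or_gt ‖w‖ 1 with hw1 | hw1
  · exact hw1.trans (Real.one_le_rpow hR₁_ge_one (by positivity))
  · have hd : (0 : ℝ) < (N - n : ℕ) := by exact_mod_cast Nat.sub_pos_of_lt hnN
    rw [one_div, Real.le_rpow_inv_iff_of_pos (norm_nonneg w) (by linarith) hd,
      Real.rpow_natCast]
    calc ‖w‖ ^ (N - n)
        ≤ (‖c 0‖ + ∑ k ∈ Finset.Icc m n, ‖c k‖) / ‖c N‖ :=
          norm_pow_sub_le_of_root hnN.le (fun k hk => (Finset.mem_Icc.1 hk).2) hcN hw1.le hw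
      _ ≤ R₁ := hR₁ ▸ le_max_right _ _

/-- Upper bound on the roots of a polynomial
`p(w) = c_N w^N + ∑_{k=m}^n c_k w^k + c_0`. -/
theorem root_upper_bound (N n m : ℕ) (hm : 1 ≤ m) (hmn : m < n) (hnN : n < N)
    (c : ℕ → ℂ) (hc0 : c 0 ≠ 0) (hcN : c N ≠ 0)
    (R₁ : ℝ)
    (hR₁ : R₁ = max 1 ((‖c 0‖ + ∑ k ∈ Finset.Icc m n, ‖c k‖) /
      ‖c N‖))
    (w : ℂ)
    (hw : c N * w ^ N + (∑ k ∈ Finset.Icc m n, c k * w ^ k) + c 0 = 0) :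
    ‖w‖ ≤ R₁ ^ ((1 : ℝ) / (N - n : ℕ)) :=
  root_upper_bound_general N n m hnN c hcN R₁ hR₁ w hw
end

section
/- Let N > n > m ≥ 1 be positive integers, and let c_0, c_m, c_{m+1}, ..., c_n, c_N be complex numbers with c_0 ≠ 0 and c_N ≠ 0. Define R_0 := min{1, |c_0|/(|c_N| + ∑_{k=m}^n |c_k|)}. Then every complex root w of the polynomial p(w) = c_N w^N + ∑_{k=m}^n c_k w^k + c_0 satisfies |w| ≥ R_0^{1/m}. -/
/-!
If `‖w‖ ≥ 1` the bound holds because `R₀ ≤ 1`. If `‖w‖ ≤ 1`, every monomial of `p(w) - c₀`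
has degree at least `m`, hence norm at most `|c_k| ‖w‖ᵐ`; the triangle inequality applied to
`c₀ = -(p(w) - c₀)` gives `‖c₀‖ ≤ (‖c_N‖ + ∑ ‖c_k‖) ‖w‖ᵐ`, i.e. `R₀ ≤ ‖w‖ᵐ`.
-/

open Finset

section NormedRing

variable {𝕜 : Type*} [SeminormedRing 𝕜] [NormOneClass 𝕜]

theorem norm_sum_mul_pow_le_of_forall_le {s : Finset ℕ} {m : ℕ} (hs : ∀ k ∈ s, m ≤ k)
    (c : ℕ → 𝕜) {w : 𝕜} (hw : ‖w‖ ≤ 1) :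
    ‖∑ k ∈ s, c k * w ^ k‖ ≤ (∑ k ∈ s, ‖c k‖) * ‖w‖ ^ m := by
  rw [sum_mul]
  refine (norm_sum_le _ _).trans (sum_le_sum fun k hk => ?_)
  calc ‖c k * w ^ k‖ ≤ ‖c k‖ * ‖w‖ ^ k := norm_mul_le_of_le le_rfl (norm_pow_le w k)
    _ ≤ ‖c k‖ * ‖w‖ ^ m :=
      mul_le_mul_of_nonneg_left (pow_le_pow_of_le_one (norm_nonneg w) hw (hs k hk))
        (norm_nonneg _)

theorem min_one_div_le_norm_pow_of_add_sum_eq_zero {s : Finset ℕ} {m : ℕ}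
    (hs : ∀ k ∈ s, m ≤ k) {c : ℕ → 𝕜} {a w : 𝕜} (hw : a + ∑ k ∈ s, c k * w ^ k = 0) :
    min 1 (‖a‖ / ∑ k ∈ s, ‖c k‖) ≤ ‖w‖ ^ m := by
  rcases le_total 1 ‖w‖ with hw1 | hw1
  · exact (min_le_left _ _).trans (one_le_pow₀ hw1)
  · refine (min_le_right _ _).trans
      (div_le_of_le_mul₀ (sum_nonneg fun k _ => norm_nonneg _) (by positivity) ?_)
    rw [eq_neg_of_add_eq_zero_left hw, norm_neg, mul_comm]
    exact norm_sum_mul_pow_le_of_forall_le hs c hw1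

end NormedRing

theorem root_lower_bound_general (N n m : ℕ) (hm : 1 ≤ m) (hmn : m < n) (hnN : n < N)
    (c : ℕ → ℂ)
    (R₀ : ℝ)
    (hR₀ : R₀ = min 1 (‖c 0‖ /
      (‖c N‖ + ∑ k ∈ Finset.Icc m n, ‖c k‖)))
    (w : ℂ)
    (hw : c N * w ^ N + (∑ k ∈ Finset.Icc m n, c k * w ^ k) + c 0 = 0) :
    R₀ ^ ((1 : ℝ) / (m : ℕ)) ≤ ‖w‖ := by
  have hN : N ∉ Icc m n := fun h => (mem_Icc.mp h).2.not_gt hnN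
  have hdeg : ∀ k ∈ insert N (Icc m n), m ≤ k := by
    simp only [mem_insert, mem_Icc]
    rintro k (rfl | ⟨hk, -⟩) <;> omega
  have hR₀_le : R₀ ≤ ‖w‖ ^ m := by
    rw [hR₀, ← sum_insert (f := fun k => ‖c k‖) hN]
    refine min_one_div_le_norm_pow_of_add_sum_eq_zero hdeg ?_
    rw [sum_insert hN]
    linear_combination hw
  have hR₀_nonneg : 0 ≤ R₀ := hR₀ ▸ le_min zero_le_one (by positivity)
  calc R₀ ^ ((1 : ℝ) / (m : ℕ)) ≤ (‖w‖ ^ m) ^ ((m : ℝ)⁻¹) := by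
        rw [one_div]; gcongr
    _ = ‖w‖ := Real.pow_rpow_inv_natCast (norm_nonneg w) (by omega)

/-- Lower bound on the roots of a polynomial
`p(w) = c_N w^N + ∑_{k=m}^n c_k w^k + c_0`. -/
theorem root_lower_bound (N n m : ℕ) (hm : 1 ≤ m) (hmn : m < n) (hnN : n < N)
    (c : ℕ → ℂ) (hc0 : c 0 ≠ 0) (hcN : c N ≠ 0)
    (R₀ : ℝ)
    (hR₀ : R₀ = min 1 (‖c 0‖ /
      (‖c N‖ + ∑ k ∈ Finset.Icc m n, ‖c k‖)))
    (w : ℂ)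
    (hw : c N * w ^ N + (∑ k ∈ Finset.Icc m n, c k * w ^ k) + c 0 = 0) :
    R₀ ^ ((1 : ℝ) / (m : ℕ)) ≤ ‖w‖ :=
  root_lower_bound_general N n m hm hmn hnN c R₀ hR₀ w hw
end

section
/- Let r_1, r_2 be real numbers such that 1, r_1, r_2 are linearly independent over ℚ. Then the set of points ({m·r_1}, {m·r_2}) ∈ ℝ², as m ranges over ℤ, is dense in the unit square [0,1]² (i.e., its closure contains [0,1]²), where {x} denotes the fractional part of x. -/
/-!
Let `G = ℤ² + ℤ (r₁, r₂) ⊆ ℝ²`. Inside the open unit square the points of `G` are exactly the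
points `({m r₁}, {m r₂})`, so it suffices to show that `G` is dense.

These points are pairwise distinct (`r₁` is irrational) and bounded, so `G` contains arbitrarily
short nonzero vectors; normalising them and passing to a limit direction `u` shows that the closure
of `G` contains the whole line `ℝ u`. A nonzero functional `f` vanishing on `u` maps `G` to the
subgroup of `ℝ` generated by `f (1, 0)`, `f (0, 1)` and `f (r₁, r₂) = r₁ f (1, 0) + r₂ f (0, 1)`,
which can only be cyclic if `a r₁ + b r₂ = n` for integers with `(a, b) ≠ 0`. Hence `f '' G` is
dense, and since the closure of `G` is a union of fibres of the open map `f`, `G` is dense.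
-/

open Filter Topology Set

theorem TotallyBounded.exists_ne_dist_lt_of_infinite {X : Type*} [PseudoMetricSpace X]
    {s : Set X} (hs : TotallyBounded s) (hinf : s.Infinite) {ε : ℝ} (hε : 0 < ε) :
    ∃ x ∈ s, ∃ y ∈ s, x ≠ y ∧ dist x y < ε := by
  obtain ⟨t, ht, hst⟩ := Metric.totallyBounded_iff.1 hs (ε / 2) (half_pos hε)
  have hcenter : ∀ x ∈ s, ∃ c ∈ t, dist x c < ε / 2 := fun x hx => by
    simpa using hst hx
  choose! c hct hc using hcenter
  obtain ⟨x, hx, y, hy, hxy, hcxy⟩ := hinf.exists_ne_map_eq_of_mapsTo hct ht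
  refine ⟨x, hx, y, hy, hxy, ?_⟩
  calc dist x y ≤ dist x (c x) + dist y (c y) := by
        rw [hcxy]; exact dist_triangle_right x y (c y)
    _ < ε / 2 + ε / 2 := add_lt_add (hc x hx) (hc y hy)
    _ = ε := add_halves ε

theorem AddSubgroup.exists_ne_zero_norm_lt_of_infinite {E : Type*} [SeminormedAddCommGroup E]
    (G : AddSubgroup E) {s : Set E} (hsG : s ⊆ G) (hs : TotallyBounded s) (hinf : s.Infinite)
    {ε : ℝ} (hε : 0 < ε) : ∃ g ∈ G, g ≠ 0 ∧ ‖g‖ < ε := by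
  obtain ⟨x, hx, y, hy, hxy, hdist⟩ := hs.exists_ne_dist_lt_of_infinite hinf hε
  exact ⟨x - y, sub_mem (hsG hx) (hsG hy), sub_ne_zero.2 hxy, by rwa [← dist_eq_norm]⟩

theorem norm_smul_sub_floor_smul_le {E : Type*} [SeminormedAddCommGroup E] [NormedSpace ℝ E]
    (s : ℝ) (g : E) : ‖s • g - ⌊s⌋ • g‖ ≤ ‖g‖ := by
  rw [← Int.cast_smul_eq_zsmul ℝ, ← sub_smul, Int.self_sub_floor, norm_smul,
    Real.norm_of_nonneg (Int.fract_nonneg s)]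
  exact mul_le_of_le_one_left (norm_nonneg g) (Int.fract_lt_one s).le

theorem AddSubgroup.exists_line_subset_closure {E : Type*} [NormedAddCommGroup E]
    [NormedSpace ℝ E] [ProperSpace E] (G : AddSubgroup E)
    (hG : ∀ ε > 0, ∃ g ∈ G, g ≠ 0 ∧ ‖g‖ < ε) :
    ∃ u : E, u ≠ 0 ∧ ∀ t : ℝ, t • u ∈ G.topologicalClosure := by
  choose g hgG hg0 hgε using fun n : ℕ => hG (1 / (n + 1)) Nat.one_div_pos_of_nat
  have hg_lim : Tendsto (‖g ·‖) atTop (𝓝 0) :=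
    squeeze_zero (fun _ => norm_nonneg _) (fun n => (hgε n).le)
      tendsto_one_div_add_atTop_nhds_zero_nat
  obtain ⟨u, hu, φ, hφ, hdir⟩ := (isCompact_sphere (0 : E) 1).tendsto_subseq
    (x := fun n => ‖g n‖⁻¹ • g n) fun n => by simp [norm_smul, hg0 n]
  refine ⟨u, ne_zero_of_mem_sphere one_ne_zero ⟨u, hu⟩, fun t => ?_⟩
  -- `t • u` is approximated by `⌊t / ‖g‖⌋ • g` for the ever shorter `g = g (φ k)`
  have happrox : Tendsto (fun k => ⌊t / ‖g (φ k)‖⌋ • g (φ k)) atTop (𝓝 (t • u)) := by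
    refine (hdir.const_smul t).congr_dist (squeeze_zero (fun _ => dist_nonneg) (fun k => ?_)
      (hg_lim.comp hφ.tendsto_atTop))
    simp only [Function.comp_apply]
    rw [dist_eq_norm, smul_smul, ← div_eq_mul_inv]
    exact norm_smul_sub_floor_smul_le _ _
  exact mem_closure_of_tendsto happrox (Eventually.of_forall fun k => zsmul_mem (hgG _) _)

theorem AddSubgroup.dense_of_ker_subset_topologicalClosure {𝕜 E : Type*} [TopologicalSpace 𝕜]
    [DivisionRing 𝕜] [ContinuousSub 𝕜] [AddCommGroup E] [TopologicalSpace E]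
    [IsTopologicalAddGroup E] [Module 𝕜 E] [ContinuousSMul 𝕜 E] (G : AddSubgroup E)
    (f : StrongDual 𝕜 E) (hf : f ≠ 0) (hker : ∀ x, f x = 0 → x ∈ G.topologicalClosure)
    (hdense : Dense (f '' G)) : Dense (G : Set E) := by
  have hfiber : f ⁻¹' (f '' G) ⊆ G.topologicalClosure := by
    rintro x ⟨g, hg, hgx⟩
    have hxg : x - g ∈ G.topologicalClosure := hker _ (by rw [map_sub, hgx, sub_self])
    have hx := add_mem hxg (G.le_topologicalClosure hg)
    rwa [sub_add_cancel] at hx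
  exact dense_closure.1 ((hdense.preimage (f.isOpenMap_of_ne_zero hf)).mono hfiber)

theorem Irrational.injective_fract_intCast_mul {r : ℝ} (hr : Irrational r) :
    Function.Injective fun m : ℤ => Int.fract (m * r) := by
  intro m m' h
  obtain ⟨z, hz⟩ := Int.fract_eq_fract.1 h
  by_contra hne
  exact (hr.intCast_mul (sub_ne_zero.2 hne)).ne_int z (by push_cast; rw [sub_mul, hz])

def kroneckerGroup (r₁ r₂ : ℝ) : AddSubgroup (ℝ × ℝ) where
  carrier := {p | ∃ a b m : ℤ, p = (a + m * r₁, b + m * r₂)}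
  zero_mem' := ⟨0, 0, 0, by ext <;> simp⟩
  add_mem' := by
    rintro _ _ ⟨a, b, m, rfl⟩ ⟨a', b', m', rfl⟩
    exact ⟨a + a', b + b', m + m', by ext <;> simp <;> ring⟩
  neg_mem' := by
    rintro _ ⟨a, b, m, rfl⟩
    exact ⟨-a, -b, -m, by ext <;> simp <;> ring⟩

section Kronecker

variable {r₁ r₂ : ℝ}

theorem fract_mem_kroneckerGroup (m : ℤ) :
    (Int.fract (m * r₁), Int.fract (m * r₂)) ∈ kroneckerGroup r₁ r₂ :=
  ⟨-⌊m * r₁⌋, -⌊m * r₂⌋, m, by ext <;> simp only [← Int.self_sub_floor, Int.cast_neg] <;> ring⟩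

theorem irrational_left_of_no_int_relation
    (hrel : ∀ a b n : ℤ, a * r₁ + b * r₂ = n → a = 0 ∧ b = 0) : Irrational r₁ := by
  rintro ⟨q, rfl⟩
  have hden := (hrel q.den 0 q.num (by
    rw [Int.cast_zero, zero_mul, add_zero, Rat.cast_def]; push_cast; field_simp)).1
  exact q.den_nz (by exact_mod_cast hden)

theorem exists_mem_kroneckerGroup_ne_zero_norm_lt (hr₁ : Irrational r₁) {ε : ℝ} (hε : 0 < ε) :
    ∃ g ∈ kroneckerGroup r₁ r₂, g ≠ 0 ∧ ‖g‖ < ε := by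
  let fractPoint : ℤ → ℝ × ℝ := fun m => (Int.fract (m * r₁), Int.fract (m * r₂))
  have hinj : Function.Injective fractPoint := fun m m' h =>
    hr₁.injective_fract_intCast_mul (congrArg Prod.fst h)
  have hbdd : range fractPoint ⊆ Icc 0 1 ×ˢ Icc 0 1 := by
    rintro _ ⟨m, rfl⟩
    exact ⟨⟨Int.fract_nonneg _, (Int.fract_lt_one _).le⟩,
      ⟨Int.fract_nonneg _, (Int.fract_lt_one _).le⟩⟩
  exact (kroneckerGroup r₁ r₂).exists_ne_zero_norm_lt_of_infinite
    (range_subset_iff.2 fract_mem_kroneckerGroup)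
    ((isCompact_Icc.prod isCompact_Icc).totallyBounded.subset hbdd)
    (infinite_range_of_injective hinj) hε

theorem dense_image_kroneckerGroup
    (hrel : ∀ a b n : ℤ, a * r₁ + b * r₂ = n → a = 0 ∧ b = 0)
    (f : ℝ × ℝ →ₗ[ℝ] ℝ) (hf : f ≠ 0) : Dense (f '' kroneckerGroup r₁ r₂) := by
  let H := (kroneckerGroup r₁ r₂).map f.toAddMonoidHom
  refine H.dense_or_cyclic.resolve_right ?_
  rintro ⟨c, hc⟩
  have hmem : ∀ p ∈ kroneckerGroup r₁ r₂, ∃ k : ℤ, f p = k * c := fun p hp => by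
    have : f p ∈ H := ⟨p, hp, rfl⟩
    rw [hc, AddSubgroup.mem_closure_singleton] at this
    obtain ⟨k, hk⟩ := this
    exact ⟨k, by rw [← hk, zsmul_eq_mul]⟩
  obtain ⟨a, ha⟩ := hmem (1, 0) ⟨1, 0, 0, by simp⟩
  obtain ⟨b, hb⟩ := hmem (0, 1) ⟨0, 1, 0, by simp⟩
  obtain ⟨n, hn⟩ := hmem (r₁, r₂) ⟨0, 0, 1, by simp⟩
  have hf' : f (r₁, r₂) = r₁ * f (1, 0) + r₂ * f (0, 1) := by
    rw [← smul_eq_mul, ← smul_eq_mul, ← map_smul, ← map_smul, ← map_add]; simp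
  apply hf
  suffices h : f (1, 0) = 0 ∧ f (0, 1) = 0 from
    LinearMap.prod_ext (LinearMap.ext_ring (by simpa using h.1))
      (LinearMap.ext_ring (by simpa using h.2))
  rcases eq_or_ne c 0 with rfl | hc0
  · simp_all
  · have hlin : (a : ℝ) * r₁ + b * r₂ = n := by
      apply mul_right_cancel₀ hc0
      rw [← hn, hf', ha, hb]
      ring
    obtain ⟨rfl, rfl⟩ := hrel a b n hlin
    simp [ha, hb]

theorem exists_eq_smul_of_mul_sub_mul_eq_zero {u x : ℝ × ℝ} (hu : u ≠ 0)
    (h : u.2 * x.1 - u.1 * x.2 = 0) : ∃ t : ℝ, x = t • u := by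
  rcases ne_or_eq u.1 0 with h1 | h1
  · refine ⟨x.1 / u.1, Prod.ext ?_ ?_⟩ <;> simp only [Prod.smul_fst, Prod.smul_snd, smul_eq_mul]
    · field_simp
    · field_simp
      linarith
  · have h2 : u.2 ≠ 0 := fun h2 => hu (Prod.ext h1 h2)
    refine ⟨x.2 / u.2, Prod.ext ?_ ?_⟩ <;> simp only [Prod.smul_fst, Prod.smul_snd, smul_eq_mul]
    · simp_all
    · field_simp

theorem dense_kroneckerGroup (hrel : ∀ a b n : ℤ, a * r₁ + b * r₂ = n → a = 0 ∧ b = 0) :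
    Dense (kroneckerGroup r₁ r₂ : Set (ℝ × ℝ)) := by
  obtain ⟨u, hu, hline⟩ := (kroneckerGroup r₁ r₂).exists_line_subset_closure fun _ hε =>
    exists_mem_kroneckerGroup_ne_zero_norm_lt (irrational_left_of_no_int_relation hrel) hε
  let f : StrongDual ℝ (ℝ × ℝ) :=
    u.2 • ContinuousLinearMap.fst ℝ ℝ ℝ - u.1 • ContinuousLinearMap.snd ℝ ℝ ℝ
  have hf : f ≠ 0 := fun hf => hu <| Prod.ext
    (by simpa [f] using congr($hf (0, -1))) (by simpa [f] using congr($hf (1, 0)))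
  refine (kroneckerGroup r₁ r₂).dense_of_ker_subset_topologicalClosure f hf (fun x hx => ?_)
    (dense_image_kroneckerGroup hrel f (fun h => hf (ContinuousLinearMap.coe_injective h)))
  obtain ⟨t, rfl⟩ := exists_eq_smul_of_mul_sub_mul_eq_zero hu (by simpa [f] using hx)
  exact hline t

theorem Ioo_prod_Ioo_inter_kroneckerGroup_subset :
    Ioo 0 1 ×ˢ Ioo 0 1 ∩ (kroneckerGroup r₁ r₂ : Set (ℝ × ℝ)) ⊆
      {p | ∃ m : ℤ, p = (Int.fract (m * r₁), Int.fract (m * r₂))} := by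
  rintro _ ⟨⟨⟨hx₀, hx₁⟩, ⟨hy₀, hy₁⟩⟩, a, b, m, rfl⟩
  refine ⟨m, Prod.ext ?_ ?_⟩ <;> dsimp only at *
  · rw [← Int.fract_intCast_add a, Int.fract_eq_self.2 ⟨hx₀.le, hx₁⟩]
  · rw [← Int.fract_intCast_add b, Int.fract_eq_self.2 ⟨hy₀.le, hy₁⟩]

end Kronecker

/-- If `1, r₁, r₂` are `ℚ`-linearly independent, then the points
`({m r₁}, {m r₂})`, `m ∈ ℤ`, are dense in the unit square. -/
theorem fract_dense_in_unit_square (r₁ r₂ : ℝ)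
    (hindep : ∀ q₀ q₁ q₂ : ℚ,
      (q₀ : ℝ) + (q₁ : ℝ) * r₁ + (q₂ : ℝ) * r₂ = 0 → q₀ = 0 ∧ q₁ = 0 ∧ q₂ = 0) :
    Set.Icc (0 : ℝ) 1 ×ˢ Set.Icc (0 : ℝ) 1 ⊆
      closure {p : ℝ × ℝ | ∃ m : ℤ, p = (Int.fract ((m : ℝ) * r₁), Int.fract ((m : ℝ) * r₂))} := by
  have hrel : ∀ a b n : ℤ, a * r₁ + b * r₂ = n → a = 0 ∧ b = 0 := fun a b n h => by
    have hq := hindep (-n) a b (by push_cast; linarith)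
    exact_mod_cast hq.2
  have hopen : IsOpen (Ioo (0 : ℝ) 1 ×ˢ Ioo (0 : ℝ) 1) := isOpen_Ioo.prod isOpen_Ioo
  calc Icc (0 : ℝ) 1 ×ˢ Icc (0 : ℝ) 1 = closure (Ioo 0 1 ×ˢ Ioo 0 1) := by
        rw [closure_prod_eq, closure_Ioo zero_ne_one]
    _ ⊆ closure (Ioo 0 1 ×ˢ Ioo 0 1 ∩ (kroneckerGroup r₁ r₂ : Set (ℝ × ℝ))) :=
        closure_minimal ((dense_kroneckerGroup hrel).open_subset_closure_inter hopen)
          isClosed_closure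
    _ ⊆ _ := closure_mono Ioo_prod_Ioo_inter_kroneckerGroup_subset
end

section
/- Let p ∈ ℂ[w_1, ..., w_n] be a non-zero polynomial and let r_1, ..., r_n be real numbers that are linearly independent over ℚ. Then the set { (w_1·exp(−r_1·z), ..., w_n·exp(−r_n·z)) : z ∈ ℂ, w = (w_1, ..., w_n) ∈ (ℂˣ)^n with p(w) = 0 } is an open subset of ℂ^n, where ℂˣ denotes the set of non-zero complex numbers. -/
/-!
Put `F v z = p (v₁ e^{r₁ z}, …, vₙ e^{rₙ z})`; then `v` lies in the set iff all `vᵢ ≠ 0` and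
`F v` has a zero. Expanding `p` into monomials writes `F v` as an exponential sum whose
frequencies `∑ αᵢ rᵢ` are pairwise distinct by `ℚ`-linear independence, so for `v ∈ (ℂˣ)ⁿ` the
entire function `F v` is not identically zero. Its zeros are then isolated, and a Hurwitz-type
argument (minimum modulus principle on a small circle around a zero) shows that `F v'` still
has a zero for all `v'` close to `v`.
-/

open Complex Filter Function Metric MvPolynomial Topology

theorem linearIndependent_cexp_mul : LinearIndependent ℂ fun t z : ℂ => cexp (t * z) := by
  let χ : ℂ → Multiplicative ℂ →* ℂ := fun t =>
    { toFun := fun z => cexp (t * z.toAdd)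
      map_one' := by simp
      map_mul' := fun x y => by simp [mul_add, exp_add] }
  have hderiv (t : ℂ) : HasDerivAt (fun z => cexp (t * z)) t 0 := by
    simpa using ((hasDerivAt_id (0 : ℂ)).const_mul t).cexp
  have hχ : Injective χ := fun t t' h =>
    (hderiv t).unique <| (hderiv t').congr_of_eventuallyEq <| .of_forall fun z =>
      DFunLike.congr_fun h (.ofAdd z)
  exact (linearIndependent_monoidHom (Multiplicative ℂ) ℂ).comp χ hχ

theorem LinearIndependent.injective_sum_natCast_mul {ι : Type*} [Fintype ι] {r : ι → ℝ}
    (hr : LinearIndependent ℚ r) : Injective fun α : ι →₀ ℕ => ∑ i, (α i : ℂ) * r i := by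
  intro α β h
  have hreal : ∑ i, (α i : ℚ) • r i = ∑ i, (β i : ℚ) • r i := by
    simp only [Rat.smul_def, Rat.cast_natCast]
    exact_mod_cast (by simpa only using h : ∑ i, (α i : ℂ) * r i = ∑ i, (β i : ℂ) * r i)
  have hcoeff := hr.fintypeLinearCombination_injective
    (by simpa only [Fintype.linearCombination_apply] using hreal)
  ext i
  exact_mod_cast congrFun hcoeff i

theorem MvPolynomial.eval_mul_cexp_mul {σ : Type*} [Fintype σ] (p : MvPolynomial σ ℂ)
    (v r : σ → ℂ) (z : ℂ) :
    eval (fun i => v i * cexp (r i * z)) p =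
      ∑ α ∈ p.support, (coeff α p * ∏ i, v i ^ α i) * cexp ((∑ i, α i * r i) * z) := by
  rw [eval_eq']
  refine Finset.sum_congr rfl fun α _ => ?_
  simp_rw [mul_pow, Finset.prod_mul_distrib, ← exp_nat_mul, ← exp_sum, Finset.sum_mul, mul_assoc]

theorem MvPolynomial.exists_eval_mul_cexp_mul_ne_zero {σ : Type*} [Fintype σ]
    {p : MvPolynomial σ ℂ} (hp : p ≠ 0) {r : σ → ℂ}
    (hr : Injective fun α : σ →₀ ℕ => ∑ i, (α i : ℂ) * r i) {v : σ → ℂ} (hv : ∀ i, v i ≠ 0) :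
    ∃ z, eval (fun i => v i * cexp (r i * z)) p ≠ 0 := by
  by_contra! h
  obtain ⟨α, hα⟩ := Finset.nonempty_of_ne_empty (mt support_eq_empty.mp hp)
  have hsum : ∑ β ∈ p.support, (coeff β p * ∏ i, v i ^ β i) •
      (fun z => cexp ((∑ i, β i * r i) * z)) = 0 := by
    ext z
    simpa [Finset.sum_apply, ← eval_mul_cexp_mul] using h z
  have hcoeff := linearIndependent_iff'.mp (linearIndependent_cexp_mul.comp _ hr) _ _ hsum α hα
  exact mem_support_iff.mp hα <| (mul_eq_zero.mp hcoeff).resolve_right <|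
    Finset.prod_ne_zero_iff.mpr fun i _ => pow_ne_zero _ (hv i)

theorem Complex.exists_mem_ball_eq_zero_of_norm_lt_on_sphere {f : ℂ → ℂ} {c : ℂ} {R : ℝ}
    (hR : 0 < R) (hf : DiffContOnCl ℂ f (ball c R)) (hlt : ∀ z ∈ sphere c R, ‖f c‖ < ‖f z‖) :
    ∃ z ∈ ball c R, f z = 0 := by
  by_contra! h
  have hsphere : ∀ z ∈ sphere c R, f z ≠ 0 := fun z hz =>
    norm_pos_iff.mp <| (norm_nonneg _).trans_lt (hlt z hz)
  have hne : ∀ z ∈ closure (ball c R), f z ≠ 0 := by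
    rw [closure_ball c hR.ne', ← ball_union_sphere]
    exact fun z hz => hz.elim (h z) (hsphere z)
  -- maximum modulus principle for `1 / f`
  obtain ⟨w, hw, hmax⟩ := exists_mem_frontier_isMaxOn_norm isBounded_ball
    ⟨c, mem_ball_self hR⟩ (hf.inv hne)
  rw [frontier_ball c hR.ne'] at hw
  have hc : ‖(f c)⁻¹‖ ≤ ‖(f w)⁻¹‖ := hmax (subset_closure (mem_ball_self hR))
  rw [norm_inv, norm_inv, inv_le_inv₀ (norm_pos_iff.mpr (h c (mem_ball_self hR)))
    (norm_pos_iff.mpr (hsphere w hw))] at hc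
  exact (hlt w hw).not_ge hc

theorem Differentiable.exists_pos_forall_sphere_ne_zero {f : ℂ → ℂ} (hf : Differentiable ℂ f)
    (hne : ∃ z, f z ≠ 0) (z₀ : ℂ) : ∃ R > 0, ∀ z ∈ sphere z₀ R, f z ≠ 0 := by
  have hiso : ∀ᶠ z in 𝓝[≠] z₀, f z ≠ 0 := by
    refine ((hf.analyticAt z₀).eventually_eq_zero_or_eventually_ne_zero).resolve_left fun h0 => ?_
    obtain ⟨z, hz⟩ := hne
    exact hz <| AnalyticOnNhd.eqOn_zero_of_preconnected_of_eventuallyEq_zero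
      (fun z _ => hf.analyticAt z) isPreconnected_univ (Set.mem_univ z₀) h0 (Set.mem_univ z)
  obtain ⟨ε, hε, hball⟩ := Metric.eventually_nhds_iff.mp (eventually_nhdsWithin_iff.mp hiso)
  refine ⟨ε / 2, half_pos hε, fun z hz => hball ?_ ?_⟩
  · rw [mem_sphere.mp hz]; linarith
  · rintro rfl
    simp only [mem_sphere, dist_self] at hz
    linarith

theorem eventually_exists_eq_zero_of_continuous_uncurry {X : Type*} [TopologicalSpace X]
    {F : X → ℂ → ℂ} (hF : Continuous (uncurry F)) (hd : ∀ x, Differentiable ℂ (F x))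
    {x₀ : X} {z₀ : ℂ} (hz₀ : F x₀ z₀ = 0) (hne : ∃ z, F x₀ z ≠ 0) :
    ∀ᶠ x in 𝓝 x₀, ∃ z, F x z = 0 := by
  obtain ⟨R, hR, hsphere⟩ := (hd x₀).exists_pos_forall_sphere_ne_zero hne z₀
  have hlt : ∀ᶠ x in 𝓝 x₀, ∀ z ∈ sphere z₀ R, ‖F x z₀‖ < ‖F x z‖ := by
    refine (isCompact_sphere z₀ R).eventually_forall_of_forall_eventually fun z hz => ?_
    refine ContinuousAt.eventually_lt (f := fun q : X × ℂ => ‖F q.1 z₀‖)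
      (g := fun q => ‖F q.1 q.2‖) ?_ ?_ ?_
    · exact (hF.comp (continuous_fst.prodMk continuous_const)).norm.continuousAt
    · exact hF.norm.continuousAt
    · simpa [hz₀] using hsphere z hz
  exact hlt.mono fun x hx =>
    let ⟨z, _, hz⟩ := exists_mem_ball_eq_zero_of_norm_lt_on_sphere hR (hd x).diffContOnCl hx
    ⟨z, hz⟩

theorem Differentiable.mvPolynomial_eval {σ : Type*} {f : ℂ → σ → ℂ}
    (hf : ∀ i, Differentiable ℂ (f · i)) (p : MvPolynomial σ ℂ) :
    Differentiable ℂ fun z => eval (f z) p := fun z =>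
  (AnalyticAt.aeval_mvPolynomial (fun i => (hf i).analyticAt z) p).differentiableAt

theorem exists_eval_eq_zero_mul_cexp_iff {σ : Type*} (p : MvPolynomial σ ℂ) (r v : σ → ℂ) :
    (∃ (z : ℂ) (w : σ → ℂ), (∀ i, w i ≠ 0) ∧ eval w p = 0 ∧ ∀ i, v i = w i * cexp (-r i * z)) ↔
      (∀ i, v i ≠ 0) ∧ ∃ z, eval (fun i => v i * cexp (r i * z)) p = 0 := by
  constructor
  · rintro ⟨z, w, hw, hwp, hv⟩
    have hvw : (fun i => v i * cexp (r i * z)) = w := funext fun i => by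
      rw [hv i, mul_assoc, ← exp_add, neg_mul, neg_add_cancel, exp_zero, mul_one]
    exact ⟨fun i => hv i ▸ mul_ne_zero (hw i) (exp_ne_zero _), z, hvw ▸ hwp⟩
  · rintro ⟨hv, z, hz⟩
    refine ⟨z, _, fun i => mul_ne_zero (hv i) (exp_ne_zero _), hz, fun i => ?_⟩
    rw [mul_assoc, ← exp_add, neg_mul, add_neg_cancel, exp_zero, mul_one]

/-- The set `{ (w₁ e^{-r₁ z}, ..., wₙ e^{-rₙ z}) : z ∈ ℂ, w ∈ (ℂˣ)ⁿ, p(w) = 0 }`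
is open in `ℂⁿ`, when `p` is a non-zero polynomial and `r₁, ..., rₙ` are
`ℚ`-linearly independent reals. -/
theorem exp_orbit_of_zero_set_open (n : ℕ) (p : MvPolynomial (Fin n) ℂ) (hp : p ≠ 0)
    (r : Fin n → ℝ) (hindep : LinearIndependent ℚ r) :
    IsOpen {v : Fin n → ℂ | ∃ (z : ℂ) (w : Fin n → ℂ),
      (∀ i, w i ≠ 0) ∧ MvPolynomial.eval w p = 0 ∧
      ∀ i, v i = w i * Complex.exp (-(r i) * z)} := by
  let F : (Fin n → ℂ) → ℂ → ℂ := fun v z => eval (fun i => v i * cexp (r i * z)) p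
  have hF : Continuous (uncurry F) := (continuous_eval p).comp (by fun_prop)
  have hd (v : Fin n → ℂ) : Differentiable ℂ (F v) :=
    Differentiable.mvPolynomial_eval (fun i => by fun_prop) p
  simp_rw [exists_eval_eq_zero_mul_cexp_iff p (fun i => r i)]
  refine isOpen_iff_mem_nhds.mpr fun v₀ ⟨hv₀, z₀, hz₀⟩ => ?_
  filter_upwards
    [eventually_all.mpr fun i => (continuous_apply i).continuousAt.eventually_ne (hv₀ i),
    eventually_exists_eq_zero_of_continuous_uncurry hF hd hz₀
      (exists_eval_mul_cexp_mul_ne_zero hp hindep.injective_sum_natCast_mul hv₀)] with v hv hz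
  exact ⟨hv, hz⟩
end

section
/- Let p ∈ ℂ[w_1, ..., w_n] be a non-zero polynomial, let r_1, ..., r_n be real numbers linearly independent over ℚ, and let α_1, ..., α_n be non-zero complex numbers. Then the entire function F : ℂ → ℂ defined by F(z) = p(α_1·exp(r_1·z), ..., α_n·exp(r_n·z)) is not identically zero. -/
/-!
Expanding `p`, the function is the linear combination `∑_d (coeff_d p · α^d) · exp (⟨d, r⟩ z)`
over the monomials `d` of `p`, and all its coefficients are non-zero. The `ℚ`-independence of `r`
makes `d ↦ ⟨d, r⟩` injective, and exponentials `z ↦ exp (a z)` with distinct real `a` are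
distinct characters of `(ℂ, +)`, hence linearly independent by Dedekind's lemma.
-/

open Complex MvPolynomial

noncomputable def cexpOfRealMulHom (a : ℝ) : Multiplicative ℂ →* ℂ where
  toFun z := cexp (a * z.toAdd)
  map_one' := by simp
  map_mul' x y := by simp [mul_add, exp_add]

theorem injective_cexpOfRealMulHom : Function.Injective cexpOfRealMulHom := by
  intro a b hab
  have h := DFunLike.congr_fun hab (Multiplicative.ofAdd 1)
  simp only [cexpOfRealMulHom, MonoidHom.coe_mk, OneHom.coe_mk, toAdd_ofAdd, mul_one] at h
  exact Real.exp_injective (by exact_mod_cast h)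

theorem linearIndependent_cexp_ofReal_mul :
    LinearIndependent ℂ (fun (a : ℝ) (z : ℂ) => cexp (a * z)) :=
  (linearIndependent_monoidHom (Multiplicative ℂ) ℂ).comp _ injective_cexpOfRealMulHom

theorem cexp_linearCombination_mul {ι : Type*} (r : ι → ℝ) (d : ι →₀ ℕ) (z : ℂ) :
    cexp (Finsupp.linearCombination ℕ r d * z) = d.prod fun i k => cexp (r i * z) ^ k := by
  simp only [Finsupp.linearCombination_apply, Finsupp.sum, Complex.ofReal_sum, Finset.sum_mul,
    exp_sum, Finsupp.prod]
  refine Finset.prod_congr rfl fun i _ => ?_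
  rw [← exp_nat_mul]
  push_cast
  ring_nf

theorem eval_mul_cexp {ι : Type*} (p : MvPolynomial ι ℂ) (α : ι → ℂ) (r : ι → ℝ) (z : ℂ) :
    eval (fun i => α i * cexp (r i * z)) p =
      ∑ d ∈ p.support, (p.coeff d * d.prod fun i k => α i ^ k) *
        cexp (Finsupp.linearCombination ℕ r d * z) := by
  rw [eval_eq]
  refine Finset.sum_congr rfl fun d _ => ?_
  simp only [cexp_linearCombination_mul, mul_assoc, Finsupp.prod, ← Finset.prod_mul_distrib,
    mul_pow]

/-- If `p` is a non-zero polynomial, `r₁, ..., rₙ` are `ℚ`-linearly independent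
reals and `α₁, ..., αₙ` are non-zero complex numbers, then the entire function
`z ↦ p(α₁ e^{r₁ z}, ..., αₙ e^{rₙ z})` is not identically zero. -/
theorem exp_poly_not_identically_zero (n : ℕ) (p : MvPolynomial (Fin n) ℂ) (hp : p ≠ 0)
    (r : Fin n → ℝ) (hindep : LinearIndependent ℚ r)
    (α : Fin n → ℂ) (hα : ∀ i, α i ≠ 0) :
    ¬ ∀ z : ℂ, MvPolynomial.eval (fun i => α i * Complex.exp (r i * z)) p = 0 := by
  intro hF
  have hexp : LinearIndependent ℂ
      fun (d : Fin n →₀ ℕ) (z : ℂ) => cexp (Finsupp.linearCombination ℕ r d * z) :=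
    linearIndependent_cexp_ofReal_mul.comp _ (hindep.restrict_scalars' ℕ)
  have hsum : ∑ d ∈ p.support, (p.coeff d * d.prod fun i k => α i ^ k) •
      (fun z : ℂ => cexp (Finsupp.linearCombination ℕ r d * z)) = 0 := by
    ext z
    simpa only [Finset.sum_apply, Pi.smul_apply, smul_eq_mul, Pi.zero_apply, eval_mul_cexp]
      using hF z
  obtain ⟨d, hd⟩ := ne_zero_iff.mp hp
  have hcoeff := linearIndependent_iff'.mp hexp _ _ hsum d (mem_support_iff.mpr hd)
  exact mul_ne_zero hd
    (Finsupp.prod_ne_zero_iff.mpr fun i _ => pow_ne_zero _ (hα i)) hcoeff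
end
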